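/- Local Conditioning belief correctness: for a node i of the associated tree T with neighbors j_1,…,j_n, the unconditioned belief satisfies Z_i = Σ_{x_{R_i}} Φ_i ∏_{m=1}^{n} m_{j_m→i}^{(x_{R_{j_m,i}})}, where each m_{j_m→i}^{(x_{R_{j_m,i}})} = Σ_{x_{L_{j_m∖i}}} m_{j_m→i}^{(x_{R_{j_m,i}}, x_{L_{j_m∖i}})} and messages conditioned on fewer variables are obtained by the independence of messages from downstream loop cutset nodes. -/

import Mathlib

open scoped Classical

/-- The product of edge potentials `Ψ k l (x k) (x l)` over the edges `{k,l}` of `G`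
both of whose endpoints lie in the vertex set `C` (each unordered edge is represented
once, by the ordered pair with `k < l`). -/
noncomputable def edgeProd {V 𝒳 : Type} [Fintype V] [LinearOrder V]
    (G : SimpleGraph V) (C : Set V) (Ψ : V → V → 𝒳 → 𝒳 → ℝ) (x : V → 𝒳) : ℝ :=
  ∏ p ∈ Finset.univ.filter
      (fun p : V × V => G.Adj p.1 p.2 ∧ p.1 < p.2 ∧ p.1 ∈ C ∧ p.2 ∈ C),
    Ψ p.1 p.2 (x p.1) (x p.2)

/-- The belief at node `i` with respect to the Gibbs distribution induced on the
subgraph of `G` spanned by the vertex set `C`: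
`Z_i^C(x_i) = Φ_i(x_i) * Σ_{x_{C∖i}} ∏_{{k,l}∈E(C)} Ψ_{kl}(x_k,x_l) ∏_{k∈C,k≠i} Φ_k(x_k)`.
Configurations are represented as functions `x : V → 𝒳` frozen to a default value `x0`
outside of `C`, so that the sum ranges exactly over configurations on `C` with `x i = xi`. -/
noncomputable def belief {V 𝒳 : Type} [Fintype V] [LinearOrder V] [Fintype 𝒳]
    (G : SimpleGraph V) (C : Set V) (Φ : V → 𝒳 → ℝ) (Ψ : V → V → 𝒳 → 𝒳 → ℝ)
    (x0 : 𝒳) (i : V) (xi : 𝒳) : ℝ :=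
  Φ i xi *
    ∑ x ∈ Finset.univ.filter
        (fun x : V → 𝒳 => x i = xi ∧ ∀ v, v ∉ C → x v = x0),
      edgeProd G C Ψ x *
        ∏ v ∈ Finset.univ.filter (fun v => v ∈ C ∧ v ≠ i), Φ v (x v)

/-- The component `G_{a∖b}` of `G` with the edge `{a,b}` removed that contains `a`. -/
def compSet {V : Type} (G : SimpleGraph V) (a b : V) : Set V :=
  {w | (G.deleteEdges {s(a, b)}).Reachable a w}

/-- The Belief Propagation message from `j` to `i`:
`m_{j→i}(x_i) = Σ_{x_j} Ψ_{ji}(x_j, x_i) Z_j^{j∖i}(x_j)`, where `Z_j^{j∖i}` is the belief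
at `j` on the component of `G ∖ {i,j}` containing `j`. -/
noncomputable def msg {V 𝒳 : Type} [Fintype V] [LinearOrder V] [Fintype 𝒳]
    (G : SimpleGraph V) (Φ : V → 𝒳 → ℝ) (Ψ : V → V → 𝒳 → 𝒳 → ℝ)
    (x0 : 𝒳) (j i : V) (xi : 𝒳) : ℝ :=
  ∑ xj : 𝒳, Ψ j i xj xi * belief G (compSet G j i) Φ Ψ x0 j xj

/-! ### Local Conditioning on an associated tree

`T` is the associated tree (on vertex type `W`) for the loop cutset `L ⊆ V` of an
original graph; `π : W → V` sends each tree node to the original node it is a copy of. -/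

/-- Self potentials conditioned on the configuration `x` at (copies of) the nodes of
`S`: the self potential of each copy `w` with `π w ∈ S` is multiplied by the indicator
`δ^{(x (π w))}`. -/
noncomputable def condPhi {W V 𝒳 : Type} (π : W → V) (Φ : W → 𝒳 → ℝ)
    (S : Finset V) (x : V → 𝒳) : W → 𝒳 → ℝ :=
  fun w a => if π w ∈ S then (if a = x (π w) then Φ w a else 0) else Φ w a

/-- The BP message from `j` to `i` on the associated tree `T`, conditioned (via
indicator-modified self potentials) on the configuration `x` at the nodes of `S`. -/
noncomputable def condMsg {W V 𝒳 : Type} [Fintype W] [LinearOrder W] [Fintype 𝒳]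
    (T : SimpleGraph W) (π : W → V) (Φ : W → 𝒳 → ℝ) (Ψ : W → W → 𝒳 → 𝒳 → ℝ)
    (x0 : 𝒳) (S : Finset V) (x : V → 𝒳) (j i : W) (xi : 𝒳) : ℝ :=
  msg T (condPhi π Φ S x) Ψ x0 j i xi

/-- `Lside T π L a b` is `L_{a∖b}`: the loop cutset nodes *all of whose copies* lie in
the component `T_{a∖b}` of `T` minus the edge `{a,b}` containing `a`. -/
noncomputable def Lside {W V : Type} (T : SimpleGraph W) (π : W → V)
    (L : Finset V) (a b : W) : Finset V :=
  L.filter (fun l => ∀ w : W, π w = l → w ∈ compSet T a b)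

/-- `Rset T π L a b` is the relevant set `R_{ab} = L ∖ (L_{a∖b} ∪ L_{b∖a})` of the edge
`{a,b}` of the associated tree. -/
noncomputable def Rset {W V : Type} [DecidableEq V] (T : SimpleGraph W) (π : W → V)
    (L : Finset V) (a b : W) : Finset V :=
  L \ (Lside T π L a b ∪ Lside T π L b a)

/-- Overwrite the configuration `x : V → 𝒳` by the configuration `y` on `S`. -/
def patch {V 𝒳 : Type} [DecidableEq V] (x : V → 𝒳) (S : Finset V) (y : {v // v ∈ S} → 𝒳) : V → 𝒳 :=
  fun v => if h : v ∈ S then y ⟨v, h⟩ else x v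

/-- The reduced message `m_{j→i}^{(x_{R_{ji}})}`: the sum of the fully conditioned
messages over all configurations of the upstream loop cutset nodes `L_{j∖i}` (the
remaining conditioning values being given by `x`). -/
noncomputable def redMsg {W V 𝒳 : Type} [Fintype W] [LinearOrder W] [Fintype 𝒳]
    (T : SimpleGraph W) (π : W → V) (L : Finset V)
    (Φ : W → 𝒳 → ℝ) (Ψ : W → W → 𝒳 → 𝒳 → ℝ) (x0 : 𝒳)
    (j i : W) (x : V → 𝒳) (xi : 𝒳) : ℝ :=
  ∑ y : {v // v ∈ Lside T π L j i} → 𝒳,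
    condMsg T π Φ Ψ x0 L (patch x (Lside T π L j i) y) j i xi

/-!
Around `i`, the loop cutset splits as `L = R_i ⊔ ⨆_j L_{j∖i}`: a cutset node lies in `R_i` unless
all its copies sit in one branch `T_{j∖i}`, and in a tree the branches at `i` are pairwise
disjoint. The sum over `x_L` is therefore a sum over `x_{R_i}` of a sum over the upstream values.
The self potential at `i` reads only `x_{π i}`, which is never upstream, and the message from `j`
reads only values at copies inside `T_{j∖i}`, which avoid every `L_{j'∖i}` with `j' ≠ j`. Hence
the inner sum of the product of messages factorises into the product of the reduced messages.
-/

namespace Function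

variable {ι : Type*} [DecidableEq ι] {π : ι → Type*} {β : Type*}

theorem _root_.DependsOn.apply_updateFinset_of_disjoint {f : (Π i, π i) → β} {s : Set ι}
    (hf : DependsOn f s) {t : Finset ι} (hst : Disjoint s t) (x : Π i, π i)
    (y : Π i : t, π i) : f (updateFinset x t y) = f x :=
  hf fun _ hi => dif_neg fun hit => Set.disjoint_left.mp hst hi hit

variable [∀ i, Fintype (π i)]

theorem sum_updateFinset_of_union_eq [AddCommMonoid β] {s t u : Finset ι} (hst : Disjoint s t)
    (hu : s ∪ t = u) (f : (Π i, π i) → β) (x : Π i, π i) :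
    ∑ w : (Π i : u, π i), f (updateFinset x u w)
      = ∑ y : (Π i : s, π i), ∑ z : (Π i : t, π i), f (updateFinset (updateFinset x s y) t z) := by
  subst hu
  rw [← Fintype.sum_prod_type']
  refine (Fintype.sum_equiv (Equiv.piFinsetUnion π hst).symm _ _ fun w => ?_)
  rw [updateFinset_updateFinset hst, Equiv.apply_symm_apply]

theorem sum_updateFinset_biUnion_prod [CommSemiring β] {κ : Type*} [DecidableEq κ]
    (N : Finset κ) (A : κ → Finset ι) (hA : (N : Set κ).PairwiseDisjoint A)
    (M : κ → (Π i, π i) → β) (D : κ → Set ι) (hM : ∀ j ∈ N, DependsOn (M j) (D j))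
    (hDA : ∀ j ∈ N, ∀ j' ∈ N, j ≠ j' → Disjoint (D j) (A j')) (x : Π i, π i) :
    ∑ w : (Π i : ↥(N.biUnion A), π i), ∏ j ∈ N, M j (updateFinset x (N.biUnion A) w)
      = ∏ j ∈ N, ∑ y : (Π i : ↥(A j), π i), M j (updateFinset x (A j) y) := by
  induction N using Finset.induction_on generalizing x with
  | empty =>
    have : IsEmpty ↥((∅ : Finset κ).biUnion A) := ⟨fun i => by simpa using i.2⟩
    simp only [Finset.prod_empty]
    rw [Finset.sum_const, Finset.card_univ, Fintype.card_unique, one_smul]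
  | @insert a N haN ih =>
    rw [Finset.coe_insert, Set.pairwiseDisjoint_insert_of_notMem haN] at hA
    rw [Finset.forall_mem_insert] at hM
    have hmem : ∀ j ∈ N, j ∈ insert a N := fun _ => Finset.mem_insert_of_mem
    have ha : a ∈ insert a N := Finset.mem_insert_self a N
    have hne : ∀ j ∈ N, a ≠ j := fun j hj h => haN (h ▸ hj)
    have hAa : Disjoint (A a) (N.biUnion A) :=
      (Finset.disjoint_biUnion_right _ _ _).mpr hA.2
    have hDa : Disjoint (D a) (N.biUnion A : Finset ι) := by
      rw [Finset.coe_biUnion, Set.disjoint_iUnion₂_right]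
      exact fun j hj => hDA a ha j (hmem j hj) (hne j hj)
    have hDN : ∀ j ∈ N, Disjoint (D j) (A a) := fun j hj =>
      hDA j (hmem j hj) a ha (hne j hj).symm
    have hinner : ∀ y : (Π i : ↥(A a), π i), ∀ j ∈ N,
        ∑ z : (Π i : ↥(A j), π i), M j (updateFinset (updateFinset x (A a) y) (A j) z)
          = ∑ z : (Π i : ↥(A j), π i), M j (updateFinset x (A j) z) := fun y j hj =>
      Fintype.sum_congr _ _ fun z => ((hM.2 j hj).updateFinset z).apply_updateFinset_of_disjoint
        ((hDN j hj).mono_left Set.sdiff_subset) x y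
    rw [sum_updateFinset_of_union_eq hAa Finset.biUnion_insert.symm
      (fun g => ∏ j ∈ insert a N, M j g), Finset.prod_insert haN, Finset.sum_mul]
    refine Fintype.sum_congr _ _ fun y => ?_
    simp_rw [Finset.prod_insert haN, hM.1.apply_updateFinset_of_disjoint hDa, ← Finset.mul_sum]
    rw [ih hA.1 hM.2 (fun j hj j' hj' => hDA j (hmem j hj) j' (hmem j' hj')),
      Finset.prod_congr rfl (hinner y)]

end Function

section Tree

open SimpleGraph

variable {W : Type} {T : SimpleGraph W} {i j j' w : W}

theorem mem_compSet_iff_exists_walk : w ∈ compSet T j i ↔ ∃ p : T.Walk j w, s(j, i) ∉ p.edges :=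
  reachable_deleteEdges_iff_exists_walk

theorem notMem_compSet_of_adj (hT : T.IsAcyclic) (hji : T.Adj j i) : i ∉ compSet T j i :=
  isAcyclic_iff_forall_adj_isBridge.mp hT hji

theorem disjoint_compSet_swap (hT : T.IsAcyclic) (hji : T.Adj j i) :
    Disjoint (compSet T j i) (compSet T i j) := by
  refine Set.disjoint_left.mpr fun w hj hi => notMem_compSet_of_adj hT hji ?_
  have hi' : (T.deleteEdges {s(j, i)}).Reachable i w := by rwa [Sym2.eq_swap]
  exact hj.trans hi'.symm

theorem compSet_subset_compSet (hT : T.IsAcyclic) (hji : T.Adj j i) (hne : j ≠ j') :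
    compSet T j i ⊆ compSet T i j' := by
  -- a walk from `j` avoiding the bridge `s(j, i)` never visits `i`, so `i - j` can be prepended
  intro w hw
  obtain ⟨p, hp⟩ := mem_compSet_iff_exists_walk.mp hw
  have hi : i ∉ p.support := fun hi =>
    hp (p.edges_takeUntil_subset_edges hi
      (isBridge_iff_forall_walk_mem_edges.mp (isAcyclic_iff_forall_adj_isBridge.mp hT hji) _))
  refine mem_compSet_iff_exists_walk.mpr ⟨.cons hji.symm p, ?_⟩
  rw [Walk.edges_cons, List.mem_cons, not_or]
  exact ⟨fun h => hne (Sym2.congr_right.mp h).symm, fun h => hi (p.fst_mem_support_of_mem_edges h)⟩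

theorem exists_adj_mem_compSet (hT : T.Connected) (hw : w ≠ i) :
    ∃ j, T.Adj i j ∧ w ∈ compSet T j i := by
  obtain ⟨p, hp⟩ := (hT.preconnected i w).some.toPath
  cases p with
  | nil => exact (hw rfl).elim
  | @cons _ j _ hij q =>
    rw [Walk.cons_isPath_iff] at hp
    exact ⟨j, hij, mem_compSet_iff_exists_walk.mpr
      ⟨q, fun h => hp.2 (q.snd_mem_support_of_mem_edges h)⟩⟩

end Tree

section Conditioning

variable {V W 𝒳 : Type}

theorem dependsOn_condPhi (π : W → V) (Φ : W → 𝒳 → ℝ) (S : Finset V) (w : W) :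
    DependsOn (fun x => condPhi π Φ S x w) {π w} := fun x y h => by
  funext a
  simp only [condPhi, h (π w) rfl]

theorem condPhi_congr_set (π : W → V) (Φ : W → 𝒳 → ℝ) {S₁ S₂ : Finset V} {w : W}
    (h : π w ∈ S₁ ↔ π w ∈ S₂) (x : V → 𝒳) : condPhi π Φ S₁ x w = condPhi π Φ S₂ x w := by
  funext a
  simp only [condPhi, h]

variable [Fintype W] [LinearOrder W] [Fintype 𝒳]

theorem belief_congr {G : SimpleGraph W} {C : Set W} {Φ₁ Φ₂ : W → 𝒳 → ℝ} {i : W}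
    (h : ∀ w ∈ C, Φ₁ w = Φ₂ w) (hi : i ∈ C) (Ψ : W → W → 𝒳 → 𝒳 → ℝ) (x0 : 𝒳) :
    belief G C Φ₁ Ψ x0 i = belief G C Φ₂ Ψ x0 i := by
  funext xi
  unfold belief
  rw [h i hi]
  congr 1
  refine Finset.sum_congr rfl fun x _ => congrArg _ (Finset.prod_congr rfl fun v hv => ?_)
  rw [h v (Finset.mem_filter.mp hv).2.1]

theorem msg_congr {G : SimpleGraph W} {Φ₁ Φ₂ : W → 𝒳 → ℝ} {j i : W}
    (h : ∀ w ∈ compSet G j i, Φ₁ w = Φ₂ w) (Ψ : W → W → 𝒳 → 𝒳 → ℝ) (x0 : 𝒳) :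
    msg G Φ₁ Ψ x0 j i = msg G Φ₂ Ψ x0 j i := by
  funext xi
  unfold msg
  rw [belief_congr h (SimpleGraph.Reachable.refl j)]

theorem dependsOn_condMsg (T : SimpleGraph W) (π : W → V) (Φ : W → 𝒳 → ℝ)
    (Ψ : W → W → 𝒳 → 𝒳 → ℝ) (x0 : 𝒳) (S : Finset V) (j i : W) (xi : 𝒳) :
    DependsOn (fun x => condMsg T π Φ Ψ x0 S x j i xi) (π '' compSet T j i) := fun _ _ h =>
  congrFun (msg_congr (fun w hw => dependsOn_condPhi π Φ S w fun _ hv =>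
    h _ (Set.mem_singleton_iff.mp hv ▸ Set.mem_image_of_mem π hw)) Ψ x0) xi

end Conditioning

section Cutset

variable {V W : Type} {T : SimpleGraph W} {π : W → V} {L : Finset V} {i j j' : W}

theorem Lside_subset_Lside_swap (hT : T.IsAcyclic) (hji : T.Adj j i) (hne : j ≠ j') :
    Lside T π L j i ⊆ Lside T π L i j' := fun _ hl =>
  Finset.mem_filter.mpr ⟨(Finset.mem_filter.mp hl).1,
    fun w hw => compSet_subset_compSet hT hji hne ((Finset.mem_filter.mp hl).2 w hw)⟩

theorem disjoint_image_compSet_Lside_swap (hT : T.IsAcyclic) (hji : T.Adj j i) :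
    Disjoint (π '' compSet T j i) (Lside T π L i j) := by
  refine Set.disjoint_left.mpr ?_
  rintro _ ⟨w, hw, rfl⟩ hl
  exact Set.disjoint_left.mp (disjoint_compSet_swap hT hji) hw ((Finset.mem_filter.mp hl).2 w rfl)

theorem disjoint_Lside_swap (hT : T.IsAcyclic) (hji : T.Adj j i)
    (hπ : ∀ l ∈ L, ∃ w, π w = l) : Disjoint (Lside T π L j i) (Lside T π L i j) := by
  refine Finset.disjoint_left.mpr fun l hl hl' => ?_
  obtain ⟨w, rfl⟩ := hπ l (Finset.mem_filter.mp hl).1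
  exact Set.disjoint_left.mp (disjoint_image_compSet_Lside_swap hT hji)
    (Set.mem_image_of_mem π ((Finset.mem_filter.mp hl).2 w rfl)) hl'

theorem apply_notMem_Lside (hT : T.IsAcyclic) (hji : T.Adj j i) : π i ∉ Lside T π L j i :=
  fun h => notMem_compSet_of_adj hT hji ((Finset.mem_filter.mp h).2 i rfl)

theorem pairwiseDisjoint_Lside [Fintype (T.neighborSet i)] (hT : T.IsAcyclic)
    (hπ : ∀ l ∈ L, ∃ w, π w = l) :
    (T.neighborFinset i : Set W).PairwiseDisjoint (fun j => Lside T π L j i) :=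
  fun _ hj _ hj' hne =>
    have hadj : ∀ {k}, k ∈ (T.neighborFinset i : Set W) → T.Adj k i := fun hk =>
      ((T.mem_neighborFinset i _).mp hk).symm
    (disjoint_Lside_swap hT (hadj hj') hπ).symm.mono_left
      (Lside_subset_Lside_swap hT (hadj hj) hne)

variable [DecidableEq V]

theorem disjoint_Rset_Lside (hT : T.IsAcyclic) (hj'i : T.Adj j' i) :
    Disjoint (Rset T π L j i) (Lside T π L j' i) := by
  refine Finset.disjoint_left.mpr fun l hR hL => ?_
  rw [Rset, Finset.mem_sdiff, Finset.mem_union, not_or] at hR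
  obtain rfl | hne := eq_or_ne j' j
  · exact hR.2.1 hL
  · exact hR.2.2 (Lside_subset_Lside_swap hT hj'i hne hL)

theorem biUnion_Rset_union_biUnion_Lside [Fintype (T.neighborSet i)] (hconn : T.Connected)
    (hT : T.IsAcyclic) (hcopy : ∀ l ∈ L, ∃ w ≠ i, π w = l) :
    (T.neighborFinset i).biUnion (fun j => Rset T π L j i)
      ∪ (T.neighborFinset i).biUnion (fun j => Lside T π L j i) = L := by
  refine subset_antisymm (Finset.union_subset
    (Finset.biUnion_subset.mpr fun _ _ => Finset.sdiff_subset)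
    (Finset.biUnion_subset.mpr fun _ _ => Finset.filter_subset _ _)) fun l hl => ?_
  obtain ⟨w, hwi, rfl⟩ := hcopy l hl
  obtain ⟨j, hij, hw⟩ := exists_adj_mem_compSet hconn hwi
  have hj : j ∈ T.neighborFinset i := (T.mem_neighborFinset i j).mpr hij
  have hwj : π w ∉ Lside T π L i j := Set.disjoint_left.mp
    (disjoint_image_compSet_Lside_swap hT hij.symm) (Set.mem_image_of_mem π hw)
  by_cases hA : π w ∈ Lside T π L j i
  · exact Finset.mem_union_right _ (Finset.mem_biUnion.mpr ⟨j, hj, hA⟩)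
  · refine Finset.mem_union_left _ (Finset.mem_biUnion.mpr ⟨j, hj, ?_⟩)
    rw [Rset, Finset.mem_sdiff, Finset.mem_union]
    tauto

theorem disjoint_biUnion_Rset_biUnion_Lside [Fintype (T.neighborSet i)] (hT : T.IsAcyclic) :
    Disjoint ((T.neighborFinset i).biUnion (fun j => Rset T π L j i))
      ((T.neighborFinset i).biUnion (fun j => Lside T π L j i)) :=
  (Finset.disjoint_biUnion_left _ _ _).mpr fun _ _ =>
    (Finset.disjoint_biUnion_right _ _ _).mpr fun j' hj' =>
      disjoint_Rset_Lside hT ((T.mem_neighborFinset i j').mp hj').symm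

theorem apply_notMem_biUnion_Lside [Fintype (T.neighborSet i)] (hT : T.IsAcyclic) :
    π i ∉ (T.neighborFinset i).biUnion (fun j => Lside T π L j i) := by
  simpa using fun j hj => apply_notMem_Lside hT ((T.mem_neighborFinset i j).mp hj).symm

end Cutset

theorem patch_eq_updateFinset {V 𝒳 : Type} [DecidableEq V] (x : V → 𝒳) (S : Finset V)
    (y : {v // v ∈ S} → 𝒳) : patch x S y = Function.updateFinset x S y :=
  rfl

section LocalConditioning

variable {W V 𝒳 : Type} [Fintype W] [LinearOrder W] [DecidableEq V] [Fintype 𝒳]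

/-- `redMsg` is elaborated with classical decidability instances; this restates it with the
ambient ones. -/
theorem redMsg_eq_sum (T : SimpleGraph W) (π : W → V) (L : Finset V) (Φ : W → 𝒳 → ℝ) (Ψ : W → W → 𝒳 → 𝒳 → ℝ)
    (x0 : 𝒳) (j i : W) (x : V → 𝒳) (xi : 𝒳) :
    redMsg T π L Φ Ψ x0 j i x xi = ∑ y : (Π _ : ↥(Lside T π L j i), 𝒳),
      condMsg T π Φ Ψ x0 L (Function.updateFinset x (Lside T π L j i) y) j i xi := by
  unfold redMsg patch Function.updateFinset
  congr!

theorem sum_prod_condMsg_eq_prod_redMsg {T : SimpleGraph W} {i : W} [Fintype (T.neighborSet i)]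
    (hT : T.IsAcyclic) {π : W → V} {L : Finset V} (hπ : ∀ l ∈ L, ∃ w, π w = l)
    (Φ : W → 𝒳 → ℝ) (Ψ : W → W → 𝒳 → 𝒳 → ℝ) (x0 : 𝒳) (x : V → 𝒳) (xi : 𝒳) :
    ∑ y : (Π _ : ↥((T.neighborFinset i).biUnion (fun j => Lside T π L j i)), 𝒳),
        ∏ j ∈ T.neighborFinset i, condMsg T π Φ Ψ x0 L
          (Function.updateFinset x ((T.neighborFinset i).biUnion (fun j => Lside T π L j i)) y)
          j i xi
      = ∏ j ∈ T.neighborFinset i, redMsg T π L Φ Ψ x0 j i x xi := by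
  have hadj : ∀ j ∈ T.neighborFinset i, T.Adj j i := fun j hj =>
    ((T.mem_neighborFinset i j).mp hj).symm
  simp only [redMsg_eq_sum]
  exact Function.sum_updateFinset_biUnion_prod _ _ (pairwiseDisjoint_Lside hT hπ)
    (fun j x => condMsg T π Φ Ψ x0 L x j i xi) (fun j => π '' compSet T j i)
    (fun j _ => dependsOn_condMsg T π Φ Ψ x0 L j i xi)
    (fun j hj j' hj' hne => (disjoint_image_compSet_Lside_swap hT (hadj j hj)).mono_right
      (Lside_subset_Lside_swap hT (hadj j' hj') hne.symm)) x

end LocalConditioning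

theorem local_conditioning_belief_correctness_general
    {W V 𝒳 : Type} [Fintype W] [LinearOrder W] [DecidableEq V] [Fintype 𝒳]
    (T : SimpleGraph W) (hconn : T.Connected) (hacyc : T.IsAcyclic)
    (π : W → V) (L : Finset V)
    (hcopies : ∀ l ∈ L, ∃ w w' : W, w ≠ w' ∧ π w = l ∧ π w' = l)
    (Φ : W → 𝒳 → ℝ) (Ψ : W → W → 𝒳 → 𝒳 → ℝ) (x0 : 𝒳)
    (i : W) (x : V → 𝒳) (xi : 𝒳) :
    ∑ y : {v // v ∈ L} → 𝒳,
        condPhi π Φ L (patch x L y) i xi *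
          ∏ j ∈ T.neighborFinset i, condMsg T π Φ Ψ x0 L (patch x L y) j i xi
      = ∑ z : {v // v ∈ (T.neighborFinset i).biUnion (fun j => Rset T π L j i)} → 𝒳,
          condPhi π Φ ((T.neighborFinset i).biUnion (fun j => Rset T π L j i))
              (patch x ((T.neighborFinset i).biUnion (fun j => Rset T π L j i)) z) i xi *
            ∏ j ∈ T.neighborFinset i,
              redMsg T π L Φ Ψ x0 j i
                (patch x ((T.neighborFinset i).biUnion (fun j => Rset T π L j i)) z) xi := by
  have hcopy : ∀ l ∈ L, ∃ w ≠ i, π w = l := fun l hl => by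
    obtain ⟨w, w', hne, hw, hw'⟩ := hcopies l hl
    by_cases hwi : w = i
    · exact ⟨w', fun h => hne (hwi.trans h.symm), hw'⟩
    · exact ⟨w, hwi, hw⟩
  have hL := biUnion_Rset_union_biUnion_Lside hconn hacyc hcopy
  simp only [patch_eq_updateFinset]
  rw [Function.sum_updateFinset_of_union_eq (disjoint_biUnion_Rset_biUnion_Lside hacyc) hL
    (fun g => condPhi π Φ L g i xi * ∏ j ∈ T.neighborFinset i, condMsg T π Φ Ψ x0 L g j i xi)]
  set R := (T.neighborFinset i).biUnion (fun j => Rset T π L j i)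
  set A := (T.neighborFinset i).biUnion (fun j => Lside T π L j i)
  have hπiA : π i ∉ A := apply_notMem_biUnion_Lside hacyc
  have hπiR : π i ∈ L ↔ π i ∈ R := by rw [← hL, Finset.mem_union, or_iff_left hπiA]
  have hphi : ∀ g y, condPhi π Φ L (Function.updateFinset g A y) i = condPhi π Φ R g i :=
    fun g y => by
      rw [(dependsOn_condPhi π Φ L i).apply_updateFinset_of_disjoint
        (Set.disjoint_singleton_left.mpr hπiA), condPhi_congr_set π Φ hπiR]
  have hπ : ∀ l ∈ L, ∃ w, π w = l := fun l hl => (hcopy l hl).imp fun _ => And.right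
  simp_rw [hphi, ← Finset.mul_sum]
  exact Fintype.sum_congr _ _ fun z =>
    congrArg _ (sum_prod_condMsg_eq_prod_redMsg hacyc hπ Φ Ψ x0 _ xi)

/-- **Local Conditioning belief correctness.** For a node `i` of the
associated tree `T` with neighbors `∂i`, the unconditioned belief
`Z_i = Σ_{x_L} Φ_i^{(x_L)} ∏_{j∈∂i} m_{j→i}^{(x_L)}` equals
`Σ_{x_{R_i}} Φ_i^{(x_{R_i})} ∏_{j∈∂i} m_{j→i}^{(x_{R_{j,i}})}`, where
`R_i = ⋃_{j∈∂i} R_{j,i}` and each reduced message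
`m_{j→i}^{(x_{R_{j,i}})} = Σ_{x_{L_{j∖i}}} m_{j→i}^{(x_{R_{j,i}}, x_{L_{j∖i}})}`
(`redMsg`) is obtained by summing the fully conditioned messages over the upstream
loop cutset configurations. -/
theorem local_conditioning_belief_correctness
    {W V 𝒳 : Type} [Fintype W] [LinearOrder W] [Fintype V] [DecidableEq V] [Fintype 𝒳]
    (T : SimpleGraph W) (hconn : T.Connected) (hacyc : T.IsAcyclic)
    (π : W → V) (L : Finset V)
    (hcopies : ∀ l ∈ L, ∃ w w' : W, w ≠ w' ∧ π w = l ∧ π w' = l)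
    (Φ : W → 𝒳 → ℝ) (Ψ : W → W → 𝒳 → 𝒳 → ℝ) (x0 : 𝒳)
    (i : W) (x : V → 𝒳) (xi : 𝒳) :
    ∑ y : {v // v ∈ L} → 𝒳,
        condPhi π Φ L (patch x L y) i xi *
          ∏ j ∈ T.neighborFinset i, condMsg T π Φ Ψ x0 L (patch x L y) j i xi
      = ∑ z : {v // v ∈ (T.neighborFinset i).biUnion (fun j => Rset T π L j i)} → 𝒳,
          condPhi π Φ ((T.neighborFinset i).biUnion (fun j => Rset T π L j i))
              (patch x ((T.neighborFinset i).biUnion (fun j => Rset T π L j i)) z) i xi *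
            ∏ j ∈ T.neighborFinset i,
              redMsg T π L Φ Ψ x0 j i
                (patch x ((T.neighborFinset i).biUnion (fun j => Rset T π L j i)) z) xi :=
  local_conditioning_belief_correctness_general T hconn hacyc π L hcopies Φ Ψ x0 i x xi
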